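/- Let n be a positive integer and let p be a norm on ℝⁿ (i.e., a seminorm with p(φ) = 0 only for φ = 0) such that p(x) is an integer for every x ∈ ℤⁿ. Then the closed unit ball {φ ∈ ℝⁿ : p(φ) ≤ 1} is the convex hull of a finite set of points all of whose coordinates are rational. -/

import Mathlib

/-!
The integer vectors `y` with `⟨y, ·⟩ ≤ p` form a finite set `D`, since they are bounded by the
values of `p` on the unit vectors. Restricted to `ℤⁿ`, `p` is an integer-valued sublinear
function; stabilizing it along one lattice direction after another turns it into an additive
minorant that still agrees with `p` at a prescribed lattice point. This discrete Hahn–Banach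
theorem gives `p x = max_{y ∈ D} ⟨y, x⟩` on `ℤⁿ`, hence by homogeneity and continuity on all
of `ℝⁿ`. The unit ball is therefore the polyhedron `⟨y, ·⟩ ≤ 1, y ∈ D`, which is
compact because `p` is a norm. By Krein–Milman it is the convex hull of its extreme points;
these are finitely many, and each is the unique solution of a linear system with integer
coefficients, hence rational.
-/

open Set Filter Topology Matrix

lemma Int.exists_forall_ge_eq_ciInf {u : ℕ → ℤ} (hu : Antitone u) (hb : BddBelow (Set.range u)) :
    ∃ N, ∀ k ≥ N, u k = ⨅ k, u k := by
  obtain ⟨N, hN⟩ := Int.csInf_mem (Set.range_nonempty u) hb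
  exact ⟨N, fun k hk => le_antisymm ((hu hk).trans_eq hN) (ciInf_le hb k)⟩

structure IsSublinear {G : Type*} [AddCommGroup G] (q : G → ℤ) : Prop where
  map_add_le : ∀ z w, q (z + w) ≤ q z + q w
  map_nsmul : ∀ (m : ℕ) z, q (m • z) = m * q z

namespace IsSublinear

variable {G : Type*} [AddCommGroup G] {q q' : G → ℤ}

lemma map_zero (hq : IsSublinear q) : q 0 = 0 := by
  simpa using hq.map_nsmul 0 0

lemma neg_map_neg_le (hq : IsSublinear q) (z : G) : -q (-z) ≤ q z := by
  have := hq.map_add_le z (-z)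
  rw [add_neg_cancel, hq.map_zero] at this
  omega

lemma map_add_of_map_neg {v w : G} (hq : IsSublinear q) (hv : q (-v) = -q v) (hw : q (-w) = -q w) :
    q (v + w) = q v + q w := by
  have := hq.map_add_le (-v) (-w)
  rw [← neg_add] at this
  linarith [hq.map_add_le v w, hq.neg_map_neg_le (v + w)]

def lineality (hq : IsSublinear q) : AddSubgroup G where
  carrier := {v | q (-v) = -q v}
  add_mem' {v w} hv hw := by
    simp only [mem_ofPred_eq, neg_add] at *
    rw [hq.map_add_of_map_neg hv hw, hq.map_add_of_map_neg (by simp [hv]) (by simp [hw]), hv, hw]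
    ring
  zero_mem' := by simp [hq.map_zero]
  neg_mem' {v} hv := by simp_all

lemma mem_lineality {hq : IsSublinear q} {v : G} : v ∈ hq.lineality ↔ q (-v) = -q v := Iff.rfl

lemma eq_of_le_of_mem_lineality (hq : IsSublinear q) (hq' : IsSublinear q') (hle : q' ≤ q)
    {v : G} (hv : v ∈ hq.lineality) : q' v = q v := by
  have h₁ : q' v ≤ q v := hle v
  have h₂ : q' (-v) ≤ q (-v) := hle (-v)
  have h₃ := hq'.neg_map_neg_le v
  rw [mem_lineality] at hv
  omega

lemma lineality_mono (hq : IsSublinear q) (hq' : IsSublinear q') (hle : q' ≤ q) :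
    hq.lineality ≤ hq'.lineality := by
  intro v hv
  rw [mem_lineality, eq_of_le_of_mem_lineality hq hq' hle hv,
    eq_of_le_of_mem_lineality hq hq' hle (neg_mem hv), mem_lineality.mp hv]

def stabilizeSeq (q : G → ℤ) (x z : G) (k : ℕ) : ℤ := q (k • x + z) - k * q x

/-- The sequence `stabilizeSeq q x z` is antitone and bounded below, so this infimum is its
eventual value. -/
noncomputable def stabilize (q : G → ℤ) (x z : G) : ℤ := ⨅ k, stabilizeSeq q x z k

section Stabilize

variable (hq : IsSublinear q) (x : G)
include hq

lemma antitone_stabilizeSeq (z : G) : Antitone (stabilizeSeq q x z) := by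
  refine antitone_nat_of_succ_le fun k => ?_
  have := hq.map_add_le x (k • x + z)
  rw [← add_assoc, ← succ_nsmul'] at this
  simp only [stabilizeSeq]
  push_cast
  linarith

lemma bddBelow_stabilizeSeq (z : G) : BddBelow (range (stabilizeSeq q x z)) := by
  refine ⟨-q (-z), forall_mem_range.mpr fun k => ?_⟩
  have := hq.map_add_le (k • x + z) (-z)
  rw [add_neg_cancel_right, hq.map_nsmul] at this
  simp only [stabilizeSeq]
  linarith

lemma exists_stabilizeSeq_eq (z : G) : ∃ N, ∀ k ≥ N, stabilizeSeq q x z k = stabilize q x z :=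
  Int.exists_forall_ge_eq_ciInf (hq.antitone_stabilizeSeq x z) (hq.bddBelow_stabilizeSeq x z)

lemma stabilize_le : stabilize q x ≤ q := fun z =>
  calc stabilize q x z ≤ stabilizeSeq q x z 0 := ciInf_le (hq.bddBelow_stabilizeSeq x z) 0
    _ = q z := by simp [stabilizeSeq]

lemma stabilize_self : stabilize q x x = q x := by
  obtain ⟨N, hN⟩ := hq.exists_stabilizeSeq_eq x x
  rw [← hN N le_rfl, stabilizeSeq, ← succ_nsmul, hq.map_nsmul]
  push_cast
  ring

lemma stabilize_neg_self : stabilize q x (-x) = -q x := by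
  obtain ⟨N, hN⟩ := hq.exists_stabilizeSeq_eq x (-x)
  rw [← hN (N + 1) (by omega), stabilizeSeq, succ_nsmul, add_neg_cancel_right, hq.map_nsmul]
  push_cast
  ring

lemma isSublinear_stabilize : IsSublinear (stabilize q x) where
  map_add_le z w := by
    obtain ⟨N, hN⟩ := hq.exists_stabilizeSeq_eq x z
    obtain ⟨M, hM⟩ := hq.exists_stabilizeSeq_eq x w
    have hsub := hq.map_add_le ((N + M) • x + z) ((N + M) • x + w)
    rw [← hN (N + M) (by omega), ← hM (N + M) (by omega)]
    calc stabilize q x (z + w) ≤ stabilizeSeq q x (z + w) (N + M + (N + M)) :=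
          ciInf_le (hq.bddBelow_stabilizeSeq x _) _
      _ ≤ _ := by
          rw [stabilizeSeq, add_nsmul, show (N + M) • x + (N + M) • x + (z + w)
            = (N + M) • x + z + ((N + M) • x + w) by abel]
          simp only [stabilizeSeq]
          push_cast
          linarith
  map_nsmul m z := by
    rcases Nat.eq_zero_or_pos m with rfl | hm
    · simp [stabilize, stabilizeSeq, hq.map_nsmul]
    obtain ⟨N, hN⟩ := hq.exists_stabilizeSeq_eq x z
    obtain ⟨M, hM⟩ := hq.exists_stabilizeSeq_eq x (m • z)
    rw [← hN (N + M) (by omega), ← hM (m * (N + M)) (by nlinarith), stabilizeSeq, stabilizeSeq,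
      mul_nsmul', ← smul_add, hq.map_nsmul]
    push_cast
    ring

lemma mem_lineality_stabilize : x ∈ (hq.isSublinear_stabilize x).lineality := by
  rw [mem_lineality, hq.stabilize_self, hq.stabilize_neg_self]

end Stabilize

lemma exists_le_subset_lineality (hq : IsSublinear q) (s : Finset G) :
    ∃ q' : G → ℤ, ∃ hq' : IsSublinear q', q' ≤ q ∧ ↑s ⊆ (hq'.lineality : Set G) := by
  classical
  induction s using Finset.induction_on with
  | empty => exact ⟨q, hq, le_rfl, by simp⟩
  | insert v s _ ih =>
    obtain ⟨q₁, hq₁, hle₁, hs₁⟩ := ih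
    refine ⟨_, hq₁.isSublinear_stabilize v, (hq₁.stabilize_le v).trans hle₁, ?_⟩
    rw [Finset.coe_insert, insert_subset_iff]
    exact ⟨hq₁.mem_lineality_stabilize v,
      hs₁.trans (hq₁.lineality_mono _ (hq₁.stabilize_le v))⟩

theorem exists_addMonoidHom_le_eq [AddGroup.FG G] (hq : IsSublinear q) (x : G) :
    ∃ f : G →+ ℤ, (∀ z, f z ≤ q z) ∧ f x = q x := by
  have hq₁ := hq.isSublinear_stabilize x
  obtain ⟨s, hs⟩ := (AddGroup.FG.out : (⊤ : AddSubgroup G).FG)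
  obtain ⟨q', hq', hle, hsub⟩ := hq₁.exists_le_subset_lineality s
  have htop : hq'.lineality = ⊤ := top_unique (hs ▸ (AddSubgroup.closure_le _).mpr hsub)
  refine ⟨AddMonoidHom.mk' q' fun v w => hq'.map_add_of_map_neg ?_ ?_, fun z => ?_, ?_⟩
  · exact mem_lineality.mp (htop ▸ AddSubgroup.mem_top v)
  · exact mem_lineality.mp (htop ▸ AddSubgroup.mem_top w)
  · exact (hle z).trans (hq.stabilize_le x z)
  · rw [AddMonoidHom.mk'_apply,
      hq₁.eq_of_le_of_mem_lineality hq' hle (hq.mem_lineality_stabilize x), hq.stabilize_self]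

end IsSublinear

theorem Matrix.exists_eq_comp_of_mulVec_injective {K L : Type*} [Field K] [Field L] (φ : K →+* L)
    {m n : Type*} [Finite m] [Fintype n] {A : Matrix m n K}
    (hA : Function.Injective (A.map φ).mulVec) {b : m → K} {x : n → L}
    (hx : A.map φ *ᵥ x = φ ∘ b) : ∃ q : n → K, x = φ ∘ q := by
  classical
  have := Fintype.ofFinite m
  have hinj : Function.Injective A.mulVec := fun u w huw =>
    φ.injective.comp_left <| hA <| funext fun i => by
      rw [← RingHom.map_mulVec, ← RingHom.map_mulVec, huw]
  obtain ⟨g, hg⟩ :=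
    LinearMap.exists_leftInverse_of_injective A.mulVecLin (LinearMap.ker_eq_bot.mpr hinj)
  have hgA : LinearMap.toMatrix' g * A = 1 := by
    rw [← LinearMap.toMatrix'_toLin' A, ← LinearMap.toMatrix'_comp, Matrix.toLin'_apply', hg,
      LinearMap.toMatrix'_id]
  refine ⟨LinearMap.toMatrix' g *ᵥ b, ?_⟩
  calc x = (LinearMap.toMatrix' g * A).map φ *ᵥ x := by
        rw [hgA, Matrix.map_one φ φ.map_zero φ.map_one, one_mulVec]
    _ = φ ∘ (LinearMap.toMatrix' g *ᵥ b) := by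
        rw [Matrix.map_mul, ← mulVec_mulVec, hx]
        ext i
        exact (RingHom.map_mulVec φ _ b i).symm

section Polyhedron

variable {ι κ : Type*} [Finite ι] [Fintype κ]

lemma eq_zero_of_mem_extremePoints_polyhedron {a : ι → κ → ℝ} {b : ι → ℝ} {x : κ → ℝ}
    (hx : x ∈ {x | ∀ i, a i ⬝ᵥ x ≤ b i}.extremePoints ℝ) {v : κ → ℝ}
    (hv : ∀ i, a i ⬝ᵥ x = b i → a i ⬝ᵥ v = 0) : v = 0 := by
  have hline : ∀ t : ℝ, ∀ i, a i ⬝ᵥ (x + t • v) = a i ⬝ᵥ x + t * a i ⬝ᵥ v := fun t i => by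
    rw [dotProduct_add, dotProduct_smul, smul_eq_mul]
  -- the constraints that are not tight at `x` stay slack near `x`
  have hnear : ∀ᶠ t in 𝓝 (0 : ℝ), ∀ i, a i ⬝ᵥ (x + t • v) ≤ b i := by
    refine eventually_all.mpr fun i => ?_
    rcases (hx.1 i).lt_or_eq with hlt | heq
    · have hcont : Continuous fun t : ℝ => a i ⬝ᵥ x + t * a i ⬝ᵥ v := by fun_prop
      filter_upwards [(hcont.tendsto' 0 _ (by simp)).eventually_le_const hlt] with t ht
      exact (hline t i).trans_le ht
    · exact Eventually.of_forall fun t => by rw [hline, hv i heq, mul_zero, add_zero, heq]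
  have hnear' := hnear.and ((continuous_neg.tendsto' 0 0 neg_zero).eventually hnear)
  obtain ⟨t, ht, hplus, hminus⟩ :=
    ((eventually_mem_nhdsWithin (s := Ioi 0)).and (nhdsWithin_le_nhds hnear')).exists
  have hseg : x ∈ openSegment ℝ (x + t • v) (x + (-t) • v) :=
    ⟨1 / 2, 1 / 2, by norm_num, by norm_num, by norm_num, by module⟩
  have := hx.2 hplus hminus hseg
  rw [add_eq_left, smul_eq_zero] at this
  exact this.resolve_left (ne_of_gt ht)

lemma finite_extremePoints_polyhedron (a : ι → κ → ℝ) (b : ι → ℝ) :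
    ({x | ∀ i, a i ⬝ᵥ x ≤ b i}.extremePoints ℝ).Finite := by
  refine Set.Finite.of_finite_image (f := fun x => {i | a i ⬝ᵥ x = b i}) (Set.toFinite _) ?_
  intro x hx y hy hxy
  refine sub_eq_zero.mp (eq_zero_of_mem_extremePoints_polyhedron hx fun i hi => ?_)
  have hiy : a i ⬝ᵥ y = b i := (Set.ext_iff.mp hxy i).mp hi
  rw [dotProduct_sub, hi, hiy, sub_self]

lemma exists_rat_of_mem_extremePoints_polyhedron (a : ι → κ → ℚ) (b : ι → ℚ) {x : κ → ℝ}
    (hx : x ∈ {x : κ → ℝ | ∀ i, (fun j => (a i j : ℝ)) ⬝ᵥ x ≤ b i}.extremePoints ℝ) :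
    ∃ q : κ → ℚ, x = fun j => (q j : ℝ) := by
  classical
  let T := {i // (fun j => (a i j : ℝ)) ⬝ᵥ x = b i}
  refine Matrix.exists_eq_comp_of_mulVec_injective (Rat.castHom ℝ) (A := of fun (i : T) j => a i j)
    (b := fun i => b i) (fun u w huw => ?_) (funext fun i => i.2)
  refine sub_eq_zero.mp (eq_zero_of_mem_extremePoints_polyhedron hx fun i hi => ?_)
  rw [dotProduct_sub, sub_eq_zero]
  exact congrFun huw ⟨i, hi⟩

theorem exists_finset_rat_polyhedron_eq_convexHull (a : ι → κ → ℚ) (b : ι → ℚ)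
    (hP : IsCompact {x : κ → ℝ | ∀ i, (fun j => (a i j : ℝ)) ⬝ᵥ x ≤ b i}) :
    ∃ F : Finset (κ → ℝ), (∀ v ∈ F, ∀ j, ∃ q : ℚ, v j = q) ∧
      {x : κ → ℝ | ∀ i, (fun j => (a i j : ℝ)) ⬝ᵥ x ≤ b i} = convexHull ℝ ↑F := by
  classical
  have hconv : Convex ℝ {x : κ → ℝ | ∀ i, (fun j => (a i j : ℝ)) ⬝ᵥ x ≤ b i} := by
    simp only [ofPred_forall]
    exact convex_iInter fun i => convex_halfSpace_le (dotProductEquiv ℝ κ _).isLinear _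
  have hfin := finite_extremePoints_polyhedron (fun i j => (a i j : ℝ)) (fun i => (b i : ℝ))
  refine ⟨hfin.toFinset, fun v hv j => ?_, ?_⟩
  · obtain ⟨q, rfl⟩ := exists_rat_of_mem_extremePoints_polyhedron a b (hfin.mem_toFinset.mp hv)
    exact ⟨q j, rfl⟩
  · rw [hfin.coe_toFinset, ← (hfin.isCompact_convexHull ℝ).isClosed.closure_eq,
      closure_convexHull_extremePoints hP hconv]

end Polyhedron

lemma IsClosed.mem_of_pos_smul_mem_of_intCast_mem {ι : Type*} [Fintype ι] {C : Set (ι → ℝ)}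
    (hC : IsClosed C) (hsmul : ∀ c : ℝ, 0 < c → ∀ w ∈ C, c • w ∈ C)
    (hlat : ∀ z : ι → ℤ, (fun i => (z i : ℝ)) ∈ C) (w : ι → ℝ) : w ∈ C := by
  rw [← hC.closure_eq, Metric.mem_closure_iff]
  intro ε hε
  set c := 2 / ε with hc_def
  have hc : 0 < c := by positivity
  refine ⟨c⁻¹ • fun i => (⌊c * w i⌋ : ℝ), hsmul _ (inv_pos.mpr hc) _ (hlat _), ?_⟩
  refine ((dist_pi_le_iff (inv_pos.mpr hc).le).mpr fun i => ?_).trans_lt (by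
    rw [hc_def, inv_div]; linarith)
  have hfloor : w i - c⁻¹ * ⌊c * w i⌋ = c⁻¹ * (c * w i - ⌊c * w i⌋) := by field_simp
  rw [Pi.smul_apply, smul_eq_mul, Real.dist_eq, hfloor, abs_mul, abs_of_pos (inv_pos.mpr hc),
    abs_of_nonneg (sub_nonneg.mpr (Int.floor_le _))]
  refine mul_le_of_le_one_right (inv_pos.mpr hc).le ?_
  linarith [Int.sub_one_lt_floor (c * w i)]

namespace Seminorm

section FiniteDimensional

variable {E : Type*} [NormedAddCommGroup E] [NormedSpace ℝ E] [FiniteDimensional ℝ E]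
  (s : Seminorm ℝ E)

lemma continuous_of_finiteDimensional : Continuous s :=
  continuousOn_univ.mp (s.convexOn.continuousOn isOpen_univ)

lemma exists_pos_mul_norm_le (hs : ∀ x, s x = 0 → x = 0) : ∃ c > 0, ∀ x, c * ‖x‖ ≤ s x := by
  obtain ⟨c, hc, hcs⟩ := (isCompact_sphere (0 : E) 1).exists_forall_le'
    s.continuous_of_finiteDimensional.continuousOn (a := 0) fun x hx =>
      (apply_nonneg s x).lt_of_ne' fun h => by simp [hs x h] at hx
  refine ⟨c, hc, fun x => ?_⟩
  rcases eq_or_ne x 0 with rfl | hx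
  · simp
  have hnx : 0 < ‖x‖ := norm_pos_iff.mpr hx
  have := hcs (‖x‖⁻¹ • x) (by simp [norm_smul, hnx.ne'])
  rw [map_smul_eq_mul, norm_inv, norm_norm, inv_mul_eq_div, le_div_iff₀ hnx] at this
  linarith

lemma isCompact_closedBall_zero (hs : ∀ x, s x = 0 → x = 0) (r : ℝ) :
    IsCompact (s.closedBall 0 r) := by
  obtain ⟨c, hc, hcs⟩ := s.exists_pos_mul_norm_le hs
  rw [closedBall_zero_eq]
  refine Metric.isCompact_of_isClosed_isBounded
    (isClosed_le s.continuous_of_finiteDimensional continuous_const)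
    (isBounded_iff_forall_norm_le.mpr ⟨r / c, fun x hx => ?_⟩)
  rw [le_div_iff₀ hc, mul_comm]
  exact (hcs x).trans hx

end FiniteDimensional

section Lattice

variable {ι : Type*} {s : Seminorm ℝ (ι → ℝ)}
  (hint : ∀ z : ι → ℤ, ∃ m : ℤ, s (fun i => (z i : ℝ)) = m)
include hint

lemma intCast_floor_apply_intCast (z : ι → ℤ) :
    (⌊s fun i => (z i : ℝ)⌋ : ℝ) = s fun i => (z i : ℝ) := by
  obtain ⟨m, hm⟩ := hint z
  rw [hm, Int.floor_intCast]

lemma isSublinear_floor_intCast : IsSublinear fun z : ι → ℤ => ⌊s fun i => (z i : ℝ)⌋ := by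
  have hq := intCast_floor_apply_intCast hint
  refine ⟨fun z w => ?_, fun m z => ?_⟩
  · have hcast : (fun i => ((z + w) i : ℝ)) = (fun i => (z i : ℝ)) + fun i => (w i : ℝ) := by
      ext; simp
    rw [← Int.cast_le (R := ℝ), Int.cast_add, hq, hq, hq, hcast]
    exact map_add_le_add s _ _
  · have hcast : (fun i => ((m • z) i : ℝ)) = (m : ℝ) • fun i => (z i : ℝ) := by
      ext; simp
    rw [← @Int.cast_inj ℝ, Int.cast_mul, hq, hq, hcast, map_smul_eq_mul, Int.cast_natCast,
      Real.norm_natCast]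

end Lattice

section DualBall

variable {ι : Type*} [Fintype ι] (s : Seminorm ℝ (ι → ℝ))

def intPointsDualBall : Set (ι → ℤ) := {y | ∀ w, (fun i => (y i : ℝ)) ⬝ᵥ w ≤ s w}

lemma finite_intPointsDualBall : s.intPointsDualBall.Finite := by
  classical
  let c : ι → ℤ := fun i => ⌈s (Pi.single i 1)⌉
  refine (Set.finite_Icc (-c) c).subset fun y hy => ⟨fun i => ?_, fun i => ?_⟩
  · have h := hy (-Pi.single i 1)
    rw [dotProduct_neg, dotProduct_single, mul_one, map_neg_eq_map] at h
    have : -(c i : ℝ) ≤ y i := by linarith [Int.le_ceil (s (Pi.single i 1))]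
    exact_mod_cast this
  · have h := hy (Pi.single i 1)
    rw [dotProduct_single, mul_one] at h
    exact Int.cast_le.mp (h.trans (Int.le_ceil _))

lemma mem_intPointsDualBall_of_forall_intCast {y : ι → ℤ}
    (hy : ∀ z : ι → ℤ, (fun i => (y i : ℝ)) ⬝ᵥ (fun i => (z i : ℝ)) ≤ s fun i => (z i : ℝ)) :
    y ∈ s.intPointsDualBall :=
  (isClosed_le (by fun_prop) s.continuous_of_finiteDimensional).mem_of_pos_smul_mem_of_intCast_mem
    (C := {w | (fun i => (y i : ℝ)) ⬝ᵥ w ≤ s w})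
    (fun c hc w hw => by
      rw [mem_ofPred_eq, dotProduct_smul, map_smul_eq_mul, Real.norm_of_nonneg hc.le, smul_eq_mul]
      exact mul_le_mul_of_nonneg_left hw hc.le)
    hy

variable {s} (hint : ∀ z : ι → ℤ, ∃ m : ℤ, s (fun i => (z i : ℝ)) = m)
include hint

lemma exists_mem_intPointsDualBall_dotProduct_eq (z : ι → ℤ) :
    ∃ y ∈ s.intPointsDualBall,
      (fun i => (y i : ℝ)) ⬝ᵥ (fun i => (z i : ℝ)) = s fun i => (z i : ℝ) := by
  classical
  obtain ⟨f, hle, heq⟩ := (isSublinear_floor_intCast hint).exists_addMonoidHom_le_eq z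
  set y := (dotProductEquiv ℤ ι).symm f.toIntLinearMap
  have hy (w : ι → ℤ) : (fun i => (y i : ℝ)) ⬝ᵥ (fun i => (w i : ℝ)) = f w := by
    have hyw : y ⬝ᵥ w = f w :=
      LinearMap.congr_fun ((dotProductEquiv ℤ ι).apply_symm_apply f.toIntLinearMap) w
    rw [← hyw, dotProduct, dotProduct, Int.cast_sum]
    simp only [Int.cast_mul]
  refine ⟨y, s.mem_intPointsDualBall_of_forall_intCast fun w => ?_, ?_⟩
  · rw [hy, ← intCast_floor_apply_intCast hint]
    exact_mod_cast hle w
  · rw [hy, heq, intCast_floor_apply_intCast hint]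

lemma exists_mem_intPointsDualBall_le (w : ι → ℝ) :
    ∃ y ∈ s.intPointsDualBall, s w ≤ (fun i => (y i : ℝ)) ⬝ᵥ w := by
  have hclosed : IsClosed {w | ∃ y ∈ s.intPointsDualBall, s w ≤ (fun i => (y i : ℝ)) ⬝ᵥ w} := by
    rw [show {w | ∃ y ∈ s.intPointsDualBall, s w ≤ (fun i => (y i : ℝ)) ⬝ᵥ w}
      = ⋃ y ∈ s.intPointsDualBall, {w | s w ≤ (fun i => (y i : ℝ)) ⬝ᵥ w} by ext; simp]
    exact s.finite_intPointsDualBall.isClosed_biUnion fun y _ =>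
      isClosed_le s.continuous_of_finiteDimensional (continuous_const.dotProduct continuous_id)
  refine hclosed.mem_of_pos_smul_mem_of_intCast_mem (fun c hc w ⟨y, hy, hyw⟩ => ⟨y, hy, ?_⟩)
    (fun z => ?_) w
  · rw [dotProduct_smul, map_smul_eq_mul, Real.norm_of_nonneg hc.le, smul_eq_mul]
    exact mul_le_mul_of_nonneg_left hyw hc.le
  · obtain ⟨y, hy, hyz⟩ := exists_mem_intPointsDualBall_dotProduct_eq hint z
    exact ⟨y, hy, hyz.ge⟩

lemma closedBall_zero_one_eq_polyhedron :
    s.closedBall 0 1 = {w | ∀ y ∈ s.intPointsDualBall, (fun i => (y i : ℝ)) ⬝ᵥ w ≤ 1} := by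
  rw [closedBall_zero_eq]
  ext w
  refine ⟨fun hw y hy => (hy w).trans hw, fun hw => ?_⟩
  obtain ⟨y, hy, hyw⟩ := exists_mem_intPointsDualBall_le hint w
  exact hyw.trans (hw y hy)

end DualBall

end Seminorm

theorem norm_ball_convexHull_rational_points_general (n : ℕ)
    (p : (Fin n → ℝ) → ℝ)
    (hp1 : ∀ (a : ℝ) (x : Fin n → ℝ), p (a • x) = |a| * p x)
    (hp2 : ∀ x y : Fin n → ℝ, p (x + y) ≤ p x + p y)
    (hdef : ∀ φ : Fin n → ℝ, p φ = 0 → φ = 0)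
    (hint : ∀ x : Fin n → ℤ, ∃ m : ℤ, p (fun i => (x i : ℝ)) = (m : ℝ)) :
    ∃ F : Finset (Fin n → ℝ),
      (∀ v ∈ F, ∀ i : Fin n, ∃ q : ℚ, v i = (q : ℝ)) ∧
      {φ : Fin n → ℝ | p φ ≤ 1} = convexHull ℝ (↑F : Set (Fin n → ℝ)) := by
  let s : Seminorm ℝ (Fin n → ℝ) := Seminorm.of p hp2 fun a x => by rw [hp1, Real.norm_eq_abs]
  have : Finite s.intPointsDualBall := s.finite_intPointsDualBall.to_subtype
  have hball : {φ : Fin n → ℝ | p φ ≤ 1} = {φ | ∀ y : s.intPointsDualBall,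
      (fun j => ((y.1 j : ℚ) : ℝ)) ⬝ᵥ φ ≤ ((1 : s.intPointsDualBall → ℚ) y : ℝ)} := by
    change {φ | s φ ≤ 1} = _
    rw [← s.closedBall_zero_eq, s.closedBall_zero_one_eq_polyhedron hint]
    ext φ
    simp
  obtain ⟨F, hF, hP⟩ := exists_finset_rat_polyhedron_eq_convexHull _ _
    (hball ▸ s.closedBall_zero_eq ▸ s.isCompact_closedBall_zero hdef 1)
  exact ⟨F, hF, hball.trans hP⟩

/-- The unit ball of a norm on `ℝⁿ` that is integer-valued on the lattice `ℤⁿ`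
is the convex hull of finitely many points with rational coordinates. -/
theorem norm_ball_convexHull_rational_points (n : ℕ) (hn : 0 < n)
    (p : (Fin n → ℝ) → ℝ)
    (hp1 : ∀ (a : ℝ) (x : Fin n → ℝ), p (a • x) = |a| * p x)
    (hp2 : ∀ x y : Fin n → ℝ, p (x + y) ≤ p x + p y)
    (hdef : ∀ φ : Fin n → ℝ, p φ = 0 → φ = 0)
    (hint : ∀ x : Fin n → ℤ, ∃ m : ℤ, p (fun i => (x i : ℝ)) = (m : ℝ)) :
    ∃ F : Finset (Fin n → ℝ),
      (∀ v ∈ F, ∀ i : Fin n, ∃ q : ℚ, v i = (q : ℝ)) ∧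
      {φ : Fin n → ℝ | p φ ≤ 1} = convexHull ℝ (↑F : Set (Fin n → ℝ)) :=
  norm_ball_convexHull_rational_points_general n p hp1 hp2 hdef hint
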